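/- For the free nonequilibrium Langevin generator (U = 0) on the torus, the eigenvalues of −L on L²(μ) are λ_{n,k} = nξ/m + k²/(βξ) for n ≥ 0, k ∈ ℤ, in the basis ψ_{nk}(q,p) = e^{ikq} H_n(p)/√(2π); hence the spectral gap is γ(ξ, 0) = min(ξ/m, 1/(βξ)). -/

import Mathlib

open Complex

/-- The Hermite polynomials associated with the Gaussian weight `e^{-βp²/(2m)}`. -/
noncomputable def hermiteGauss (β m : ℝ) (n : ℕ) (p : ℝ) : ℝ :=
  ((-1 : ℝ)^n / (Nat.factorial n)) * (Real.sqrt (m / β))^n *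
    Real.exp (β * p^2 / (2 * m)) *
    iteratedDeriv n (fun s => Real.exp (-β * s^2 / (2 * m))) p

/-- The basis functions `ψ_{nk}(q,p) = e^{ikq} H_n(p)/√(2π)` for the free Langevin
generator on the torus (d = 1, U ≡ 0). -/
noncomputable def freeBasis (β m : ℝ) (n : ℕ) (k : ℤ) (q p : ℝ) : ℂ :=
  Complex.exp (Complex.I * k * q) * (hermiteGauss β m n p) / Real.sqrt (2 * Real.pi)

noncomputable def fG (β m : ℝ) : ℝ → ℝ := fun s => Real.exp (-β * s^2 / (2 * m))
noncomputable def uG (β m : ℝ) (n : ℕ) : ℝ → ℝ := iteratedDeriv n (fG β m)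
noncomputable def EG (β m : ℝ) : ℝ → ℝ := fun p => Real.exp (β * p^2 / (2 * m))
noncomputable def cG (β m : ℝ) (n : ℕ) : ℝ :=
  ((-1 : ℝ)^n / (Nat.factorial n)) * (Real.sqrt (m / β))^n

lemma hermiteGauss_eq (β m : ℝ) (n : ℕ) (p : ℝ) :
    hermiteGauss β m n p = cG β m n * (EG β m p * uG β m n p) := by
  unfold hermiteGauss cG EG uG fG; ring

lemma fG_contDiff (β m : ℝ) : ContDiff ℝ (⊤ : ℕ∞) (fG β m) := by
  unfold fG
  exact Real.contDiff_exp.comp (ContDiff.div_const (by fun_prop) _)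

lemma uG_diff (β m : ℝ) (n : ℕ) : Differentiable ℝ (uG β m n) := by
  unfold uG
  exact (fG_contDiff β m).differentiable_iteratedDeriv n
    (by exact_mod_cast lt_top_iff_ne_top.2 (by simp))

lemma uG_hasDeriv (β m : ℝ) (n : ℕ) (p : ℝ) :
    HasDerivAt (uG β m n) (uG β m (n + 1) p) p := by
  have h := (uG_diff β m n p).hasDerivAt
  have h2 : uG β m (n + 1) p = deriv (uG β m n) p := by
    unfold uG; rw [iteratedDeriv_succ]
  rw [h2]; exact h

lemma fG_hasDeriv (β m : ℝ) (hm : m ≠ 0) (p : ℝ) :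
    HasDerivAt (fG β m) (-(β / m) * p * fG β m p) p := by
  have h1 : HasDerivAt (fun s : ℝ => -β * s^2 / (2 * m)) (-(β / m) * p) p := by
    have := ((hasDerivAt_pow 2 p).const_mul (-β)).div_const (2 * m)
    refine this.congr_deriv ?_
    field_simp; ring
  have := h1.exp
  unfold fG
  convert this using 1
  ring

lemma EG_hasDeriv (β m : ℝ) (hm : m ≠ 0) (p : ℝ) :
    HasDerivAt (EG β m) ((β / m) * p * EG β m p) p := by
  have h1 : HasDerivAt (fun s : ℝ => β * s^2 / (2 * m)) ((β / m) * p) p := by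
    have := ((hasDerivAt_pow 2 p).const_mul β).div_const (2 * m)
    refine this.congr_deriv ?_
    field_simp; ring
  have := h1.exp
  unfold EG
  convert this using 1
  ring

lemma uG_rec (β m : ℝ) (hm : m ≠ 0) (n : ℕ) (p : ℝ) :
    uG β m (n + 2) p = -(β / m) * p * uG β m (n + 1) p - (β / m) * (n + 1) * uG β m n p := by
  induction n generalizing p with
  | zero =>
    have h0 : uG β m 0 = fG β m := by unfold uG; rw [iteratedDeriv_zero]
    have h1 : ∀ x, uG β m 1 x = -(β / m) * x * fG β m x := by
      intro x
      have e : uG β m 1 = deriv (uG β m 0) := by unfold uG; rw [iteratedDeriv_one, iteratedDeriv_zero]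
      rw [e, h0]
      exact (fG_hasDeriv β m hm x).deriv
    have h1' : uG β m 1 = fun x => -(β / m) * x * fG β m x := funext h1
    have h2 : uG β m 2 p = deriv (uG β m 1) p := by unfold uG; rw [iteratedDeriv_succ]
    have hd : HasDerivAt (fun x => -(β / m) * x * fG β m x)
        (-(β / m) * fG β m p + (-(β / m) * p) * (-(β / m) * p * fG β m p)) p := by
      have := ((hasDerivAt_id p).const_mul (-(β / m))).mul (fG_hasDeriv β m hm p)
      refine this.congr_deriv ?_
      simp only [id_eq]; ring
    rw [h2, h1', hd.deriv]
    simp only [h1, h0]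
    push_cast; ring
  | succ k ih =>
    have hfun : uG β m (k + 2) = fun x => -(β / m) * x * uG β m (k + 1) x
        - (β / m) * (k + 1) * uG β m k x := funext fun x => ih x
    have h2 : uG β m (k + 3) p = deriv (uG β m (k + 2)) p := by unfold uG; rw [iteratedDeriv_succ]
    have hd : HasDerivAt (fun x => -(β / m) * x * uG β m (k + 1) x - (β / m) * (k + 1) * uG β m k x)
        ((-(β / m) * uG β m (k + 1) p + (-(β / m) * p) * uG β m (k + 2) p)
          - (β / m) * (k + 1) * uG β m (k + 1) p) p := by
      have ha := ((hasDerivAt_id p).const_mul (-(β / m))).mul (uG_hasDeriv β m (k + 1) p)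
      have hb := (uG_hasDeriv β m k p).const_mul ((β / m) * (k + 1))
      have hc := ha.sub hb
      refine hc.congr_deriv ?_
      simp only [id_eq]; ring
    have e3 : uG β m (k + 1 + 2) p = deriv (uG β m (k + 2)) p := h2
    rw [e3, hfun, hd.deriv, ← hfun]
    push_cast; ring

lemma H_hasDeriv (β m : ℝ) (hm : m ≠ 0) (n : ℕ) (p : ℝ) :
    HasDerivAt (hermiteGauss β m n)
      ((β / m) * p * hermiteGauss β m n p + cG β m n * (EG β m p * uG β m (n + 1) p)) p := by
  have hfun : hermiteGauss β m n = fun x => cG β m n * (EG β m x * uG β m n x) :=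
    funext fun x => hermiteGauss_eq β m n x
  rw [hfun]
  have := ((EG_hasDeriv β m hm p).mul (uG_hasDeriv β m n p)).const_mul (cG β m n)
  refine this.congr_deriv ?_
  simp only [hermiteGauss_eq]
  ring

lemma derivH_eq (β m : ℝ) (hm : m ≠ 0) (n : ℕ) (p : ℝ) :
    deriv (hermiteGauss β m n) p
      = (β / m) * p * hermiteGauss β m n p + cG β m n * (EG β m p * uG β m (n + 1) p) :=
  (H_hasDeriv β m hm n p).deriv

lemma derivH_hasDeriv (β m : ℝ) (hm : m ≠ 0) (n : ℕ) (p : ℝ) :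
    HasDerivAt (deriv (hermiteGauss β m n))
      ((β / m) * hermiteGauss β m n p
        + (β / m) * p * ((β / m) * p * hermiteGauss β m n p + cG β m n * (EG β m p * uG β m (n + 1) p))
        + cG β m n * ((β / m) * p * EG β m p * uG β m (n + 1) p + EG β m p * uG β m (n + 2) p)) p := by
  have hfun : deriv (hermiteGauss β m n)
      = fun x => (β / m) * x * hermiteGauss β m n x + cG β m n * (EG β m x * uG β m (n + 1) x) :=
    funext fun x => derivH_eq β m hm n x
  rw [hfun]
  have ha := ((hasDerivAt_id p).const_mul (β / m)).mul (H_hasDeriv β m hm n p)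
  have hb := ((EG_hasDeriv β m hm p).mul (uG_hasDeriv β m (n + 1) p)).const_mul (cG β m n)
  have hc := ha.add hb
  refine hc.congr_deriv ?_
  simp only [id_eq]; ring

lemma key_real (β m ξ : ℝ) (hβ : β ≠ 0) (hm : m ≠ 0) (n : ℕ) (p : ℝ) :
    ξ * (-(p / m) * deriv (hermiteGauss β m n) p
          + (1 / β) * deriv (deriv (hermiteGauss β m n)) p)
      = -((n : ℝ) * ξ / m) * hermiteGauss β m n p := by
  rw [(derivH_hasDeriv β m hm n p).deriv]
  rw [derivH_eq β m hm n p]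
  rw [uG_rec β m hm n p]
  simp only [hermiteGauss_eq]
  field_simp
  ring

/-- For the free nonequilibrium Langevin generator (`U = 0`) on the torus, the eigenvalues
of `−L` are `λ_{n,k} = nξ/m + k²/(βξ)`; for `k = 0`, `ψ_{n,0}` is an exact eigenfunction
with `L ψ_{n,0} = −(nξ/m) ψ_{n,0}`, and the spectral gap is
`γ(ξ,0) = min(ξ/m, 1/(βξ))`, i.e. the least element of
`{nξ/m + k²/(βξ) : (n,k) ≠ (0,0)}`. -/
theorem free_langevin_spectral_gap (β m ξ : ℝ) (hβ : 0 < β) (hm : 0 < m) (hξ : 0 < ξ) :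
    (∀ (n : ℕ) (q p : ℝ),
      (p / m) * deriv (fun q' => freeBasis β m n 0 q' p) q
        + ξ * (-(p / m) * deriv (fun p' => freeBasis β m n 0 q p') p
            + (1 / β) * deriv (deriv (fun p' => freeBasis β m n 0 q p')) p)
      = -((n : ℂ) * ξ / m) * freeBasis β m n 0 q p) ∧
    IsLeast {r : ℝ | ∃ (n : ℕ) (k : ℤ), (n, k) ≠ (0, 0) ∧
        r = (n : ℝ) * ξ / m + (k : ℝ)^2 / (β * ξ)}
      (min (ξ / m) (1 / (β * ξ))) := by
  constructor
  · intro n q p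
    have h0 : ∀ q' p', freeBasis β m n 0 q' p'
        = (hermiteGauss β m n p' : ℂ) / (Real.sqrt (2 * Real.pi) : ℝ) := by
      intro q' p'; simp [freeBasis]
    have hq : deriv (fun q' => freeBasis β m n 0 q' p) q = 0 := by
      have e : (fun q' => freeBasis β m n 0 q' p)
          = fun _ => (hermiteGauss β m n p : ℂ) / (Real.sqrt (2 * Real.pi) : ℝ) :=
        funext fun q' => h0 q' p
      rw [e, deriv_const]
    have hfp : (fun p' => freeBasis β m n 0 q p')
        = fun p' => (hermiteGauss β m n p' : ℂ) / (Real.sqrt (2 * Real.pi) : ℝ) :=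
      funext fun p' => h0 q p'
    have hd1 : deriv (fun p' => freeBasis β m n 0 q p')
        = fun p' => ((deriv (hermiteGauss β m n) p' : ℝ) : ℂ) / (Real.sqrt (2 * Real.pi) : ℝ) := by
      rw [hfp]
      refine funext fun x => ?_
      rw [(((H_hasDeriv β m hm.ne' n x).ofReal_comp).div_const _).deriv,
        (H_hasDeriv β m hm.ne' n x).deriv]
    have hd2 : deriv (deriv (fun p' => freeBasis β m n 0 q p')) p
        = (((deriv (deriv (hermiteGauss β m n)) p : ℝ)) : ℂ) / (Real.sqrt (2 * Real.pi) : ℝ) := by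
      rw [hd1]
      have h3 := (((derivH_hasDeriv β m hm.ne' n p).ofReal_comp).div_const
        ((Real.sqrt (2 * Real.pi) : ℂ))).deriv
      rw [h3, (derivH_hasDeriv β m hm.ne' n p).deriv]
    have hd1' : deriv (fun p' => freeBasis β m n 0 q p') p
        = ((deriv (hermiteGauss β m n) p : ℝ) : ℂ) / (Real.sqrt (2 * Real.pi) : ℝ) := by
      rw [hd1]
    rw [hq, hd2, hd1', h0]
    have k := key_real β m ξ hβ.ne' hm.ne' n p
    have kc : (ξ : ℂ) * (-((p : ℂ) / m) * ((deriv (hermiteGauss β m n) p : ℝ) : ℂ)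
          + (1 / (β : ℂ)) * ((deriv (deriv (hermiteGauss β m n)) p : ℝ) : ℂ))
        = -((n : ℂ) * ξ / m) * ((hermiteGauss β m n p : ℝ) : ℂ) := by
      exact_mod_cast congrArg (fun x : ℝ => (x : ℂ)) k
    have hz : ((p : ℂ) / m) * 0 = 0 := by ring
    rw [hz, zero_add]
    linear_combination kc / ((Real.sqrt (2 * Real.pi) : ℝ) : ℂ)
  · constructor
    · rcases le_total (ξ / m) (1 / (β * ξ)) with h | h
      · rw [min_eq_left h]
        exact ⟨1, 0, by simp, by push_cast; ring⟩
      · rw [min_eq_right h]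
        exact ⟨0, 1, by simp, by push_cast; ring⟩
    · rintro r ⟨n, k, hnk, rfl⟩
      rcases Nat.eq_zero_or_pos n with hn | hn
      · subst hn
        have hk : k ≠ 0 := by
          intro h; exact hnk (by simp [h])
        have hk2 : (1 : ℝ) ≤ (k : ℝ)^2 := by
          have h1 : (1 : ℤ) ≤ k^2 := by
            have := Int.one_le_abs (by simpa using hk)
            nlinarith [_root_.sq_abs k]
          exact_mod_cast h1
        have hle : (1 : ℝ) / (β * ξ) ≤ (k : ℝ)^2 / (β * ξ) := by
          gcongr
        calc min (ξ / m) (1 / (β * ξ)) ≤ 1 / (β * ξ) := min_le_right _ _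
          _ ≤ (0 : ℕ) * ξ / m + (k : ℝ)^2 / (β * ξ) := by
              simpa using hle
      · have h1 : ξ / m ≤ (n : ℝ) * ξ / m := by
          rw [mul_div_assoc]
          exact le_mul_of_one_le_left (by positivity) (Nat.one_le_cast.mpr hn)
        have h2 : (0 : ℝ) ≤ (k : ℝ)^2 / (β * ξ) := by positivity
        calc min (ξ / m) (1 / (β * ξ)) ≤ ξ / m := min_le_left _ _
          _ ≤ (n : ℝ) * ξ / m + (k : ℝ)^2 / (β * ξ) := by linarith
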